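/- arXiv:2208.03400 — 2 statements merged into one kernel-verified Lean document; each statement's English description precedes it below -/
import Mathlib

section
/- Let $N_1, N_2, X$ be unit vectors in a real inner product space with $\langle N_1, N_2\rangle > 0$, and suppose $\langle e^{-a\tau} N_1 + e^{-ar} N_2, X\rangle = 0$ where $a, r, \tau > 0$. Then $|\langle N_1, X\rangle| \le \frac{e^{-ar}}{\sqrt{e^{-2ar} + e^{-2a\tau}}}$ and $|\langle N_2, X\rangle| \le \frac{e^{-a\tau}}{\sqrt{e^{-2ar} + e^{-2a\tau}}}$. -/
/-!
Write `u = ⟪N₁, X⟫`, `v = ⟪N₂, X⟫`, `α = e^{-aτ}`, `β = e^{-ar}`. The orthogonality hypothesis is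
`α u + β v = 0`, so `u v ≤ 0`. Expanding `‖X - u N₁ - v N₂‖² ≥ 0` gives
`u² + v² ≤ 1 + 2 ⟪N₁, N₂⟫ u v ≤ 1`, and then `u² (α² + β²) = β² (u² + v²) ≤ β²`, and symmetrically for `v`.
-/

open Real
open scoped RealInnerProductSpace

theorem inner_sq_add_inner_sq_le {E : Type*} [NormedAddCommGroup E] [InnerProductSpace ℝ E]
    {N₁ N₂ : E} (hN₁ : ‖N₁‖ = 1) (hN₂ : ‖N₂‖ = 1) (X : E) :
    ⟪N₁, X⟫ ^ 2 + ⟪N₂, X⟫ ^ 2 ≤ ‖X‖ ^ 2 + 2 * ⟪N₁, N₂⟫ * (⟪N₁, X⟫ * ⟪N₂, X⟫) := by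
  have h := sq_nonneg ‖X - (⟪N₁, X⟫ • N₁ + ⟪N₂, X⟫ • N₂)‖
  rw [← real_inner_self_eq_norm_sq] at h
  simp only [inner_sub_left, inner_sub_right, inner_add_left, inner_add_right,
    real_inner_smul_left, real_inner_smul_right, real_inner_self_eq_norm_sq, norm_smul, mul_pow,
    norm_eq_abs, sq_abs, hN₁, hN₂, real_inner_comm N₁ X, real_inner_comm N₂ X,
    real_inner_comm N₁ N₂] at h
  linarith

theorem mul_nonpos_of_mul_add_mul_eq_zero {α β u v : ℝ} (hα : 0 ≤ α) (hβ : 0 < β)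
    (h : α * u + β * v = 0) : u * v ≤ 0 := by
  have : β * (u * v) = -(α * u ^ 2) := by linear_combination u * h
  nlinarith [sq_nonneg u]

theorem abs_le_div_sqrt_of_mul_add_mul_eq_zero {α β u v : ℝ} (hβ : 0 ≤ β)
    (hαβ : 0 < β ^ 2 + α ^ 2) (h : α * u + β * v = 0) (huv : u ^ 2 + v ^ 2 ≤ 1) :
    |u| ≤ β / √(β ^ 2 + α ^ 2) := by
  rw [le_div_iff₀ (sqrt_pos.mpr hαβ), ← sqrt_sq_eq_abs, ← sqrt_mul (sq_nonneg u),
    sqrt_le_iff]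
  refine ⟨hβ, ?_⟩
  calc u ^ 2 * (β ^ 2 + α ^ 2) = β ^ 2 * (u ^ 2 + v ^ 2) := by
        linear_combination (α * u - β * v) * h
    _ ≤ β ^ 2 := by nlinarith [sq_nonneg β]

theorem stmt1_general {E : Type*} [NormedAddCommGroup E] [InnerProductSpace ℝ E]
    (N1 N2 X : E) (hN1 : ‖N1‖ = 1) (hN2 : ‖N2‖ = 1) (hX : ‖X‖ = 1)
    (hpos : (0 : ℝ) < inner ℝ N1 N2)
    (a r τ : ℝ)
    (horth : (inner ℝ (Real.exp (-a * τ) • N1 + Real.exp (-a * r) • N2) X : ℝ) = 0) :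
    |(inner ℝ N1 X : ℝ)| ≤ Real.exp (-a * r) /
        Real.sqrt (Real.exp (-2 * a * r) + Real.exp (-2 * a * τ)) ∧
    |(inner ℝ N2 X : ℝ)| ≤ Real.exp (-a * τ) /
        Real.sqrt (Real.exp (-2 * a * r) + Real.exp (-2 * a * τ)) := by
  have exp_mul_sq (t : ℝ) : exp (-2 * a * t) = exp (-a * t) ^ 2 := by
    rw [sq, ← exp_add]; ring_nf
  have hline : exp (-a * τ) * ⟪N1, X⟫ + exp (-a * r) * ⟪N2, X⟫ = 0 := by
    rwa [inner_add_left, real_inner_smul_left, real_inner_smul_left] at horth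
  have huv := mul_nonpos_of_mul_add_mul_eq_zero (exp_pos _).le (exp_pos _) hline
  have hbessel : ⟪N1, X⟫ ^ 2 + ⟪N2, X⟫ ^ 2 ≤ 1 := by
    nlinarith [inner_sq_add_inner_sq_le hN1 hN2 X]
  have hsum : 0 < exp (-a * r) ^ 2 + exp (-a * τ) ^ 2 := by positivity
  rw [exp_mul_sq, exp_mul_sq]
  refine ⟨abs_le_div_sqrt_of_mul_add_mul_eq_zero (exp_pos _).le hsum hline hbessel, ?_⟩
  rw [add_comm] at hsum hline hbessel ⊢
  exact abs_le_div_sqrt_of_mul_add_mul_eq_zero (exp_pos _).le hsum hline hbessel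

theorem stmt1 {E : Type*} [NormedAddCommGroup E] [InnerProductSpace ℝ E]
    (N1 N2 X : E) (hN1 : ‖N1‖ = 1) (hN2 : ‖N2‖ = 1) (hX : ‖X‖ = 1)
    (hpos : (0 : ℝ) < inner ℝ N1 N2)
    (a r τ : ℝ) (ha : 0 < a) (hr : 0 < r) (hτ : 0 < τ)
    (horth : (inner ℝ (Real.exp (-a * τ) • N1 + Real.exp (-a * r) • N2) X : ℝ) = 0) :
    |(inner ℝ N1 X : ℝ)| ≤ Real.exp (-a * r) /
        Real.sqrt (Real.exp (-2 * a * r) + Real.exp (-2 * a * τ)) ∧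
    |(inner ℝ N2 X : ℝ)| ≤ Real.exp (-a * τ) /
        Real.sqrt (Real.exp (-2 * a * r) + Real.exp (-2 * a * τ)) :=
  stmt1_general N1 N2 X hN1 hN2 hX hpos a r τ horth
end

section
/- Let $T \subseteq \mathbb{R}^n$ be bounded with positive Lebesgue measure and let $T_h$ be its convex hull. Suppose $\mathrm{Vol}(T_h) \le R \cdot \mathrm{Vol}(T)$ for some $R \ge 1$, and that $T_h$ contains a ball of radius $\epsilon$. Then $N(T_h, \epsilon) \le R \cdot 3^n \cdot N(T, \epsilon)$, where $N$ denotes the covering number by $\epsilon$-balls. -/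
/-!
A maximal `ε`-separated subset `A` of `T_h` is an `ε`-net of `T_h`, so `N(T_h, ε) ≤ #A`.
The balls of radius `ε/2` around the points of `A` are disjoint, and since `T_h` is convex and
contains a ball `B(x₀, ε)` they all lie in the image of `T_h` under the homothety of centre `x₀`
and ratio `3/2`; hence `#A (ε/2)ⁿ ≤ (3/2)ⁿ Vol(T_h)`. On the other hand covering `T` by
`N(T, ε)` balls gives `Vol(T) ≤ N(T, ε) εⁿ` (volumes in units of the unit ball).
Together with `Vol(T_h) ≤ R Vol(T)` this yields `#A ≤ R 3ⁿ N(T, ε)`.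
-/

open MeasureTheory Measure Metric Set

/-- The covering number of `S` by closed `ε`-balls. -/
noncomputable def coverNum {X : Type*} [MetricSpace X] (S : Set X) (ε : ℝ) : ℕ :=
  sInf {n : ℕ | ∃ t : Finset X, t.card = n ∧ S ⊆ ⋃ y ∈ t, Metric.closedBall y ε}

section CoverNum

variable {X : Type*} [MetricSpace X] {S : Set X} {ε : ℝ}

lemma coverNum_le_card {t : Finset X} (h : S ⊆ ⋃ y ∈ t, closedBall y ε) :
    coverNum S ε ≤ t.card :=
  Nat.sInf_le ⟨t, rfl, h⟩

lemma TotallyBounded.exists_finset_card_eq_coverNum (hS : TotallyBounded S) (hε : 0 < ε) :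
    ∃ t : Finset X, t.card = coverNum S ε ∧ S ⊆ ⋃ y ∈ t, closedBall y ε := by
  obtain ⟨t, -, ht, hcov⟩ := finite_approx_of_totallyBounded hS ε hε
  refine Nat.sInf_mem (s := {m | ∃ t : Finset X, t.card = m ∧ S ⊆ ⋃ y ∈ t, closedBall y ε})
    ⟨_, ht.toFinset, rfl, ?_⟩
  simpa using hcov.trans (iUnion₂_mono fun _ _ => ball_subset_closedBall)

lemma TotallyBounded.exists_finset_pairwise_lt_dist_subset_iUnion_closedBall (hS : TotallyBounded S)
    (hε : 0 < ε) : ∃ A : Finset X, ↑A ⊆ S ∧ (A : Set X).Pairwise (ε < dist · ·) ∧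
      S ⊆ ⋃ y ∈ A, closedBall y ε := by
  set δ := ε.toNNReal
  have hpack : packingNumber δ S ≠ ⊤ := by
    obtain ⟨N, -, hN, hcov⟩ :=
      exists_finite_isCover_of_totallyBounded (ε := δ / 2) (by simpa [δ] using hε) hS
    have := (packingNumber_two_mul_le_externalCoveringNumber (δ / 2) S).trans
      hcov.externalCoveringNumber_le_encard
    rw [mul_div_cancel₀ δ two_ne_zero] at this
    exact ne_top_of_le_ne_top (encard_ne_top_iff.mpr hN) this
  have hfin : (maximalSeparatedSet δ S).Finite :=
    encard_ne_top_iff.mp (encard_maximalSeparatedSet hpack ▸ hpack)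
  refine ⟨hfin.toFinset, by simpa using maximalSeparatedSet_subset, ?_, ?_⟩
  · simpa [IsSeparated, δ, edist_dist, hε.le] using
      isSeparated_maximalSeparatedSet (ε := δ) (A := S)
  · simpa [δ, hε.le] using (isCover_maximalSeparatedSet hpack).subset_iUnion_closedBall

end CoverNum

lemma Convex.closedBall_subset_image_homothety {E : Type*} [NormedAddCommGroup E]
    [NormedSpace ℝ E] {K : Set E} (hK : Convex ℝ K) {x₀ y : E} {r c : ℝ} (hc : 0 < c)
    (hball : closedBall x₀ r ⊆ K) (hy : y ∈ K) :
    closedBall y (c * r) ⊆ AffineMap.homothety x₀ (1 + c) '' K := by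
  intro z hz
  have hw : x₀ + c⁻¹ • (z - y) ∈ K := by
    refine hball ?_
    rw [mem_closedBall, dist_eq_norm, add_sub_cancel_left, norm_smul, Real.norm_eq_abs,
      abs_inv, abs_of_pos hc, inv_mul_le_iff₀ hc, ← dist_eq_norm]
    exact hz
  have hc' : 1 + c ≠ 0 := by positivity
  refine ⟨x₀ + (1 + c)⁻¹ • (z - x₀), ?_, ?_⟩
  · convert hK hy hw (a := (1 + c)⁻¹) (b := c * (1 + c)⁻¹) (by positivity) (by positivity)
      (by rw [← one_add_mul, mul_inv_cancel₀ hc']) using 1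
    match_scalars <;> field_simp <;> ring
  · rw [AffineMap.homothety_apply, vsub_eq_sub, vadd_eq_add, add_sub_cancel_left, smul_smul,
      mul_inv_cancel₀ hc', one_smul, sub_add_cancel]

section Volume

variable {E : Type*} [NormedAddCommGroup E] [NormedSpace ℝ E] [MeasurableSpace E] [BorelSpace E]
  [FiniteDimensional ℝ E] (μ : Measure E) [μ.IsAddHaarMeasure]

lemma measureReal_le_coverNum_mul {S : Set E} {ε : ℝ} (hS : Bornology.IsBounded S)
    (hε : 0 < ε) :
    μ.real S ≤ coverNum S ε * μ.real (closedBall 0 ε) := by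
  obtain ⟨t, ht, hcov⟩ :=
    (hS.isCompact_closure.totallyBounded.subset subset_closure).exists_finset_card_eq_coverNum hε
  calc μ.real S ≤ μ.real (⋃ y ∈ t, closedBall y ε) :=
        measureReal_mono hcov (measure_biUnion_lt_top t.finite_toSet
          fun _ _ => measure_closedBall_lt_top).ne
    _ ≤ ∑ y ∈ t, μ.real (closedBall y ε) := measureReal_biUnion_finset_le _ _
    _ = coverNum S ε * μ.real (closedBall 0 ε) := by
      simp [addHaar_real_closedBall_center, ht]

lemma measureReal_image_homothety (x : E) (r : ℝ) (s : Set E) :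
    μ.real (AffineMap.homothety x r '' s) = |r| ^ Module.finrank ℝ E * μ.real s := by
  simp [measureReal_def, addHaar_image_homothety, abs_pow]

lemma card_mul_measureReal_closedBall_le {A : Finset E} {r : ℝ} {U : Set E}
    (hA : (A : Set E).Pairwise (2 * r < dist · ·)) (hU : ∀ y ∈ A, closedBall y r ⊆ U)
    (hUfin : μ U ≠ ⊤) : A.card * μ.real (closedBall 0 r) ≤ μ.real U :=
  calc A.card * μ.real (closedBall 0 r) = μ.real (⋃ y ∈ A, closedBall y r) := by
        rw [measureReal_biUnion_finset (fun a ha b hb hab => closedBall_disjoint_closedBall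
          (by linarith [hA ha hb hab])) (fun _ _ => measurableSet_closedBall)
          fun _ _ => measure_closedBall_lt_top.ne]
        simp [addHaar_real_closedBall_center]
    _ ≤ μ.real U := measureReal_mono (iUnion₂_subset hU) hUfin

lemma Convex.card_mul_measureReal_closedBall_half_le {K : Set E} (hK : Convex ℝ K)
    (hKb : Bornology.IsBounded K) {x₀ : E} {ε : ℝ} (hball : closedBall x₀ ε ⊆ K)
    {A : Finset E} (hAK : ↑A ⊆ K) (hA : (A : Set E).Pairwise (ε < dist · ·)) :
    A.card * μ.real (closedBall 0 (ε / 2)) ≤ (3 / 2) ^ Module.finrank ℝ E * μ.real K := by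
  have hU : ∀ y ∈ A, closedBall y (ε / 2) ⊆ AffineMap.homothety x₀ (3 / 2 : ℝ) '' K :=
    fun y hy => by
      have := hK.closedBall_subset_image_homothety (c := 1 / 2) one_half_pos hball (hAK hy)
      norm_num at this
      simpa [div_eq_inv_mul] using this
  have hUfin : μ (AffineMap.homothety x₀ (3 / 2 : ℝ) '' K) ≠ ⊤ := by
    rw [addHaar_image_homothety]
    exact ENNReal.mul_ne_top ENNReal.ofReal_ne_top hKb.measure_lt_top.ne
  have := card_mul_measureReal_closedBall_le μ (hA.mono' fun x y h => by linarith) hU hUfin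
  rwa [measureReal_image_homothety, abs_of_pos (by norm_num)] at this

end Volume

theorem stmt14_general (n : ℕ) (T : Set (EuclideanSpace ℝ (Fin n)))
    (hbd : Bornology.IsBounded T)
    (R : ℝ) (hR : 1 ≤ R)
    (hvol : (volume (convexHull ℝ T)).toReal ≤ R * (volume T).toReal)
    (ε : ℝ) (hε : 0 < ε) (x₀ : EuclideanSpace ℝ (Fin n))
    (hball : Metric.closedBall x₀ ε ⊆ convexHull ℝ T) :
    (coverNum (convexHull ℝ T) ε : ℝ) ≤ R * 3 ^ n * coverNum T ε := by
  set Th := convexHull ℝ T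
  have hThbd : Bornology.IsBounded Th := isBounded_convexHull.mpr hbd
  obtain ⟨A, hATh, hAsep, hAcov⟩ := (hThbd.isCompact_closure.totallyBounded.subset
    subset_closure).exists_finset_pairwise_lt_dist_subset_iUnion_closedBall hε
  have hpack := (convex_convexHull ℝ T).card_mul_measureReal_closedBall_half_le volume hThbd hball
    hATh hAsep
  have hcover := measureReal_le_coverNum_mul volume hbd hε
  rw [addHaar_real_closedBall' _ _ (by positivity), finrank_euclideanSpace_fin] at hpack hcover
  set b := volume.real (closedBall (0 : EuclideanSpace ℝ (Fin n)) 1)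
  have hb : 0 < b := ENNReal.toReal_pos (measure_closedBall_pos volume _ one_pos).ne'
    measure_closedBall_lt_top.ne
  have hcard : (A.card : ℝ) ≤ R * 3 ^ n * coverNum T ε := by
    refine le_of_mul_le_mul_right ?_ (by positivity : 0 < (ε / 2) ^ n * b)
    calc A.card * ((ε / 2) ^ n * b) ≤ (3 / 2) ^ n * volume.real Th := hpack
      _ ≤ (3 / 2) ^ n * (R * volume.real T) := by gcongr; exact hvol
      _ ≤ (3 / 2) ^ n * (R * (coverNum T ε * (ε ^ n * b))) := by gcongr
      _ = R * 3 ^ n * coverNum T ε * ((ε / 2) ^ n * b) := by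
        rw [div_pow, div_pow]; field_simp
  exact (Nat.cast_le.mpr (coverNum_le_card hAcov)).trans hcard

theorem stmt14 (n : ℕ) (T : Set (EuclideanSpace ℝ (Fin n)))
    (hbd : Bornology.IsBounded T) (hmeas : MeasurableSet T) (hpos : 0 < volume T)
    (R : ℝ) (hR : 1 ≤ R)
    (hvol : (volume (convexHull ℝ T)).toReal ≤ R * (volume T).toReal)
    (ε : ℝ) (hε : 0 < ε) (x₀ : EuclideanSpace ℝ (Fin n))
    (hball : Metric.closedBall x₀ ε ⊆ convexHull ℝ T) :
    (coverNum (convexHull ℝ T) ε : ℝ) ≤ R * 3 ^ n * coverNum T ε :=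
  stmt14_general n T hbd R hR hvol ε hε x₀ hball
end
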